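/- arXiv:1606.09515 — 2 statements merged into one kernel-verified Lean document; each statement's English description precedes it below -/
import Mathlib

section
/- Let k ≥ 2 be even and a ≠ 0. Then the germ a xᵏ is RK-equivalent to xᵏ: there exists a local diffeomorphism φ fixing 0 with (1/φ'(x)) · a φ(x)ᵏ = xᵏ near 0. -/
/-- Two (germs at `0` of) smooth functions `f g : ℝ → ℝ` are *restrictedly contact
equivalent* (RK-equivalent) if there is a germ at `0` of a diffeomorphism
`φ : (ℝ,0) → (ℝ,0)` with `g = (1/φ') · (f ∘ φ)` near `0`. -/
def RKEquiv (f g : ℝ → ℝ) : Prop :=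
  ∃ φ : ℝ → ℝ, ContDiffAt ℝ (⊤ : ℕ∞) φ 0 ∧ φ 0 = 0 ∧ deriv φ 0 ≠ 0 ∧
    ∀ᶠ x in nhds (0 : ℝ), g x = (1 / deriv φ x) * f (φ x)

lemma odd_pow_surj (n : ℕ) (hn : Odd n) (b : ℝ) : ∃ c : ℝ, c ^ n = b := by
  rcases le_or_gt 0 b with hb | hb
  · refine ⟨b ^ ((n : ℝ)⁻¹), ?_⟩
    rw [← Real.rpow_natCast (b ^ ((n : ℝ)⁻¹)) n, ← Real.rpow_mul hb,
      inv_mul_cancel₀ (by exact_mod_cast hn.pos.ne'), Real.rpow_one]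
  · refine ⟨-((-b) ^ ((n : ℝ)⁻¹)), ?_⟩
    rw [hn.neg_pow, ← Real.rpow_natCast ((-b) ^ ((n : ℝ)⁻¹)) n,
      ← Real.rpow_mul (by linarith), inv_mul_cancel₀ (by exact_mod_cast hn.pos.ne'),
      Real.rpow_one, neg_neg]

/-- For even `k ≥ 2` and `a ≠ 0`, the germ `a xᵏ` is RK-equivalent to `xᵏ`. -/
theorem rk_even_power (k : ℕ) (hk : 2 ≤ k) (hke : Even k) (a : ℝ) (ha : a ≠ 0) :
    RKEquiv (fun x => a * x ^ k) (fun x => x ^ k) := by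
  obtain ⟨c, hc⟩ := odd_pow_surj (k - 1) (Nat.Even.sub_odd (by omega) hke odd_one) (1 / a)
  have hc0 : c ≠ 0 := by
    intro h
    rw [h, zero_pow (by omega)] at hc
    exact ha (by field_simp at hc; simp at hc)
  have hd : ∀ x : ℝ, deriv (fun x : ℝ => c * x) x = c := by
    intro x; rw [deriv_const_mul_field]; simp
  refine ⟨fun x => c * x, (contDiff_const.mul contDiff_id).contDiffAt, by simp, ?_, ?_⟩
  · rw [hd]; exact hc0
  · filter_upwards with x
    rw [hd]
    have hck : c ^ k = c * c ^ (k - 1) := by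
      rw [← pow_succ']; congr 1; omega
    rw [mul_pow, hck]
    field_simp [hc0]
    rw [mul_assoc, hc, mul_one_div_cancel ha, mul_one]
end

section
/- Let k ≥ 2 be odd. Then for a > 0 the germ a xᵏ is RK-equivalent to xᵏ, and for a < 0 it is RK-equivalent to -xᵏ; moreover xᵏ and -xᵏ are not RK-equivalent for odd k. -/
lemma deriv_aux (c x : ℝ) : deriv (fun x : ℝ => c * x) x = c := by
  simpa using ((hasDerivAt_id x).const_mul c).deriv

lemma rk_of (k : ℕ) (a b c : ℝ) (hc : c ≠ 0) (h : a * c ^ k / c = b) :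
    RKEquiv (fun x => a * x ^ k) (fun x => b * x ^ k) := by
  refine ⟨fun x => c * x, (contDiff_const.mul contDiff_id).contDiffAt, by simp, ?_, ?_⟩
  · rw [deriv_aux]; exact hc
  · filter_upwards with x
    rw [deriv_aux, mul_pow, ← h]
    field_simp

lemma cont_deriv_aux (φ : ℝ → ℝ) (h : ContDiffAt ℝ (⊤ : ℕ∞) φ 0) : ContinuousAt (deriv φ) 0 := by
  have h1 := (h.fderiv_right (m := 0) (by simp)).continuousAt
  have h2 : Continuous (fun L : ℝ →L[ℝ] ℝ => L 1) := by continuity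
  have : deriv φ = fun x => fderiv ℝ φ x 1 := by
    funext x; rw [fderiv_apply_one_eq_deriv]
  rw [this]
  exact h2.continuousAt.comp h1

/-- For odd `k ≥ 2`: `a xᵏ` is RK-equivalent to `xᵏ` when `a > 0`, to `-xᵏ`
when `a < 0`; and `xᵏ` and `-xᵏ` are not RK-equivalent. -/
theorem rk_odd_power (k : ℕ) (hk : 2 ≤ k) (hko : Odd k) :
    (∀ a : ℝ, 0 < a → RKEquiv (fun x => a * x ^ k) (fun x => x ^ k)) ∧
    (∀ a : ℝ, a < 0 → RKEquiv (fun x => a * x ^ k) (fun x => -x ^ k)) ∧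
    ¬ RKEquiv (fun x => x ^ k) (fun x => -x ^ k) := by
  have hk1 : (1:ℝ) ≤ (k:ℝ) - 1 := by
    have : (2:ℝ) ≤ (k:ℝ) := by exact_mod_cast hk
    linarith
  have hkm : ((k:ℝ) - 1) ≠ 0 := by linarith
  refine ⟨?_, ?_, ?_⟩
  · intro a ha
    set c : ℝ := a ^ (-(1:ℝ) / ((k:ℝ) - 1)) with hc
    have hcpos : 0 < c := Real.rpow_pos_of_pos ha _
    have hck : c ^ (k - 1) = a⁻¹ := by
      rw [hc, ← Real.rpow_natCast (a ^ (-(1:ℝ)/((k:ℝ)-1))) (k-1), ← Real.rpow_mul ha.le]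
      have : ((k - 1 : ℕ) : ℝ) = (k:ℝ) - 1 := by
        have : 1 ≤ k := by omega
        push_cast [this]; ring
      rw [this, div_mul_eq_mul_div, neg_one_mul, neg_div, div_self hkm, Real.rpow_neg_one]
    have key : a * c ^ k / c = 1 := by
      have hck2 : c ^ k = c ^ (k - 1) * c := by
        rw [← pow_succ]; congr 1; omega
      rw [hck2, hck]
      field_simp
    simpa using rk_of k a 1 c hcpos.ne' key
  · intro a ha
    set c : ℝ := (-a)⁻¹ ^ ((1:ℝ) / ((k:ℝ) - 1)) with hc
    have hna : (0:ℝ) < (-a)⁻¹ := inv_pos.2 (neg_pos.2 ha)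
    have hcpos : 0 < c := Real.rpow_pos_of_pos hna _
    have hck : c ^ (k - 1) = (-a)⁻¹ := by
      rw [hc, ← Real.rpow_natCast ((-a)⁻¹ ^ ((1:ℝ)/((k:ℝ)-1))) (k-1), ← Real.rpow_mul hna.le]
      have : ((k - 1 : ℕ) : ℝ) = (k:ℝ) - 1 := by
        have : 1 ≤ k := by omega
        push_cast [this]; ring
      rw [this, one_div, inv_mul_cancel₀ hkm, Real.rpow_one]
    have key : a * c ^ k / c = -1 := by
      have hkk : k = (k - 1) + 1 := by omega
      rw [hkk, pow_succ, ← mul_assoc, hck]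
      have ha' : a ≠ 0 := ha.ne
      field_simp
    have := rk_of k a (-1) c hcpos.ne' key
    simpa [neg_one_mul] using this
  · rintro ⟨φ, hφ, h0, hd, hev⟩
    set c := deriv φ 0 with hcdef
    -- slope tends to c
    have hder : HasDerivAt φ c 0 := (hφ.differentiableAt (by simp)).hasDerivAt
    have hslope : Filter.Tendsto (fun x => φ x / x) (nhdsWithin 0 {(0:ℝ)}ᶜ) (nhds c) := by
      have := hasDerivAt_iff_tendsto_slope.1 hder
      refine this.congr' ?_
      filter_upwards with x
      simp [slope, h0, div_eq_inv_mul]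
    have hcont : ContinuousAt (deriv φ) 0 := cont_deriv_aux φ hφ
    have hprod : Filter.Tendsto (fun x => (φ x / x) * deriv φ x)
        (nhdsWithin 0 {(0:ℝ)}ᶜ) (nhds (c * c)) :=
      hslope.mul (hcont.continuousWithinAt.tendsto)
    have hc2 : 0 < c * c := by
      rcases hd.lt_or_gt with h | h <;> nlinarith
    have hev2 : ∀ᶠ x in nhdsWithin 0 {(0:ℝ)}ᶜ, 0 < (φ x / x) * deriv φ x :=
      hprod.eventually (eventually_gt_nhds hc2)
    have m1 : nhdsWithin (0:ℝ) (Set.Ioi 0) ≤ nhdsWithin 0 {(0:ℝ)}ᶜ :=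
      nhdsWithin_mono 0 (fun x hx => ne_of_gt hx)
    have hevA : ∀ᶠ x in nhdsWithin (0:ℝ) (Set.Ioi 0), 0 < (φ x / x) * deriv φ x :=
      hev2.filter_mono m1
    have hevB : ∀ᶠ x in nhdsWithin (0:ℝ) (Set.Ioi 0),
        (fun x => -x ^ k) x = (1 / deriv φ x) * (fun x => x ^ k) (φ x) :=
      hev.filter_mono nhdsWithin_le_nhds
    have hevC : ∀ᶠ x in nhdsWithin (0:ℝ) (Set.Ioi 0), x ∈ Set.Ioi (0:ℝ) :=
      self_mem_nhdsWithin
    obtain ⟨x, hx1, hx2, hx3⟩ := (hevA.and (hevB.and hevC)).exists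
    simp only at hx2
    rw [Set.mem_Ioi] at hx3
    -- now derive contradiction
    have hdx : deriv φ x ≠ 0 := by
      intro h; rw [h] at hx1; simp at hx1
    have hφx : φ x ≠ 0 := by
      intro h; rw [h] at hx1; simp at hx1
    have hpd : 0 < φ x * deriv φ x := by
      have h1 := mul_pos hx1 hx3
      have h2 : φ x / x * deriv φ x * x = φ x * deriv φ x := by
        field_simp
      linarith
    obtain ⟨m, hm⟩ := hko
    have hpk : φ x ^ k = -x ^ k * deriv φ x := by
      field_simp at hx2
      linarith [hx2]
    have hpos : 0 < φ x ^ k * deriv φ x := by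
      have h1 : φ x ^ k * deriv φ x = (φ x ^ m) ^ 2 * (φ x * deriv φ x) := by
        rw [hm]; ring
      rw [h1]
      have : 0 < (φ x ^ m) ^ 2 := by positivity
      exact mul_pos this hpd
    have hneg : φ x ^ k * deriv φ x < 0 := by
      rw [hpk]
      have hxk : 0 < x ^ k := pow_pos hx3 k
      have : 0 < deriv φ x ^ 2 := by positivity
      nlinarith
    linarith
end
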